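/- If A ∈ R̄^{n×n} has det(A) invertible in R, then the columns of A are linearly independent: the only vector v ∈ (R^× ∪ {−∞})^n with all entries of Av of layer zero is v = (−∞,…,−∞). -/

import Mathlib

/-- ELT addition on pairs (tangible value, layer). -/
def eltAdd {F L : Type*} [LinearOrder F] [Add L] (x y : F × L) : F × L :=
  if y.1 < x.1 then x else if x.1 < y.1 then y else (x.1, x.2 + y.2)

/-- ELT multiplication on pairs (tangible value, layer). -/
def eltMul {F L : Type*} [Add F] [Mul L] (x y : F × L) : F × L :=
  (x.1 + y.1, x.2 * y.2)

/-- Addition on R̄ = R ∪ {−∞}. -/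
def eAdd {F L : Type*} [LinearOrder F] [Add L] :
    Option (F × L) → Option (F × L) → Option (F × L)
  | none, y => y
  | some a, none => some a
  | some a, some b => some (eltAdd a b)

/-- Multiplication on R̄ = R ∪ {−∞}. -/
def eMul {F L : Type*} [Add F] [Mul L] :
    Option (F × L) → Option (F × L) → Option (F × L)
  | some a, some b => some (eltMul a b)
  | _, _ => none

/-- The layer (sorting map) on R̄; the layer of −∞ is 0. -/
def sBar {F L : Type*} [Zero L] (x : Option (F × L)) : L :=
  (x.map Prod.snd).getD 0

/-- The surpassing relation on R̄. -/
def eSurp {F L : Type*} [LinearOrder F] [Add L] [Zero L]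
    (x y : Option (F × L)) : Prop :=
  ∃ z : Option (F × L), sBar z = 0 ∧ x = eAdd y z

/-- Finite sums in R̄ (the result is independent of the enumeration order since
`eAdd` is commutative and associative with identity −∞). -/
noncomputable def eSumF {F L α : Type*} [Fintype α] [LinearOrder F] [Add L]
    (f : α → Option (F × L)) : Option (F × L) :=
  ((Finset.univ : Finset α).toList.map f).foldr eAdd none

/-- Finite products in R̄. -/
def eProd {F L : Type*} [Zero F] [Add F] [One L] [Mul L] {k : ℕ}
    (f : Fin k → Option (F × L)) : Option (F × L) :=
  (List.ofFn f).foldr eMul (some ((0 : F), (1 : L)))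

/-- The ELT determinant, with sgn(σ) interpreted as the layer element (0, ±1). -/
noncomputable def eltDet {F L : Type*} [AddCommGroup F] [LinearOrder F] [IsOrderedAddMonoid F] [CommRing L] {n : ℕ}
    (A : Matrix (Fin n) (Fin n) (Option (F × L))) : Option (F × L) :=
  eSumF fun σ : Equiv.Perm (Fin n) =>
    eMul (some ((0 : F), ((Equiv.Perm.sign σ : ℤ) : L))) (eProd fun i => A i (σ i))

/-- Matrix multiplication over R̄. -/
noncomputable def eMatMul {F L : Type*} [AddCommGroup F] [LinearOrder F] [IsOrderedAddMonoid F] [CommRing L] {n : ℕ}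
    (A B : Matrix (Fin n) (Fin n) (Option (F × L))) :
    Matrix (Fin n) (Fin n) (Option (F × L)) :=
  fun i j => eSumF fun k => eMul (A i k) (B k j)

/-- The identity matrix over R̄. -/
def eId {F L : Type*} [AddCommGroup F] [LinearOrder F] [IsOrderedAddMonoid F] [CommRing L] (n : ℕ) :
    Matrix (Fin n) (Fin n) (Option (F × L)) :=
  fun i j => if i = j then some ((0 : F), (1 : L)) else none

/-!
The tangible values of the entries of `A` admit row and column potentials `α`, `β` with
`tangibleVal Aᵢⱼ ≤ αᵢ + βⱼ` and `∑ α + ∑ β = tangibleVal (det A)`. This is the duality behind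
the Hungarian algorithm; the potentials come from longest simple walks in the exchange graph of
an optimal permutation, which has no cycle of positive weight.

If `v ≠ −∞`, pick `i` maximising `tangibleVal vᵢ + βᵢ`. Replacing column `i` of `A` by `A v`
gives a matrix whose determinant has layer zero, and by multilinearity this determinant is
`vᵢ · det A` plus the terms `vₖ · det (A with column i replaced by column k)`, `k ≠ i`. Those
terms have layer zero (two equal columns) and, by the choice of `i`, tangible value at most that
of `vᵢ · det A`. Hence `vᵢ · det A` has layer zero, which is impossible since `vᵢ` has nonzero
layer and the layer of `det A` is invertible.
-/

namespace ELT

section Pairs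

variable {F L : Type*} [LinearOrder F]

theorem eltAdd_assoc [AddSemigroup L] (x y z : F × L) :
    eltAdd (eltAdd x y) z = eltAdd x (eltAdd y z) := by
  unfold eltAdd
  split_ifs <;> grind

theorem eltAdd_comm [AddCommMagma L] (x y : F × L) : eltAdd x y = eltAdd y x := by
  unfold eltAdd
  split_ifs <;> grind [add_comm]

theorem eltMul_eltAdd [AddCommMonoid F] [IsOrderedCancelAddMonoid F] [Distrib L] (x y z : F × L) :
    eltMul x (eltAdd y z) = eltAdd (eltMul x y) (eltMul x z) := by
  unfold eltAdd eltMul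
  split_ifs <;> grind [mul_add]

theorem eltAdd_eltMul [AddCommMonoid F] [IsOrderedCancelAddMonoid F] [Distrib L] (x y z : F × L) :
    eltMul (eltAdd x y) z = eltAdd (eltMul x z) (eltMul y z) := by
  unfold eltAdd eltMul
  split_ifs <;> grind [add_mul]

end Pairs

instance {F L : Type*} : Zero (Option (F × L)) := ⟨none⟩

instance {F L : Type*} [Zero F] [One L] : One (Option (F × L)) := ⟨some (0, 1)⟩

instance {F L : Type*} [LinearOrder F] [Add L] : Add (Option (F × L)) := ⟨eAdd⟩

instance {F L : Type*} [Add F] [Mul L] : Mul (Option (F × L)) := ⟨eMul⟩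

def tangibleVal {F L : Type*} (x : Option (F × L)) : WithBot F := x.map Prod.fst

theorem tangibleVal_add {F L : Type*} [LinearOrder F] [Add L] (x y : Option (F × L)) :
    tangibleVal (x + y) = max (tangibleVal x) (tangibleVal y) := by
  rcases x with _ | ⟨a, ℓ⟩ <;> rcases y with _ | ⟨b, m⟩
  · rfl
  · exact (bot_sup_eq _).symm
  · exact (sup_bot_eq _).symm
  · show ((eltAdd (a, ℓ) (b, m)).1 : WithBot F) = max (a : WithBot F) b
    unfold eltAdd
    split_ifs with h₁ h₂
    · exact (max_eq_left (WithBot.coe_le_coe.2 h₁.le)).symm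
    · exact (max_eq_right (WithBot.coe_le_coe.2 h₂.le)).symm
    · simp only at h₁ h₂ ⊢
      rw [le_antisymm (not_lt.1 h₂) (not_lt.1 h₁), max_self]

theorem tangibleVal_mul {F L : Type*} [Add F] [Mul L] (x y : Option (F × L)) :
    tangibleVal (x * y) = tangibleVal x + tangibleVal y := by
  rcases x with _ | a <;> rcases y with _ | b
  · rfl
  · rfl
  · rfl
  · exact WithBot.coe_add a.1 b.1

section Semiring

variable {F L : Type*} [AddCommMonoid F] [LinearOrder F] [IsOrderedCancelAddMonoid F]
  [CommSemiring L]

instance : CommSemiring (Option (F × L)) where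
  nsmul := nsmulRec
  npow := npowRec
  add_assoc := by
    rintro (_ | x) (_ | y) (_ | z) <;> first | rfl | exact congrArg some (eltAdd_assoc x y z)
  zero_add := by rintro (_ | x) <;> rfl
  add_zero := by rintro (_ | x) <;> rfl
  add_comm := by
    rintro (_ | x) (_ | y) <;> first | rfl | exact congrArg some (eltAdd_comm x y)
  mul_assoc := by
    rintro (_ | x) (_ | y) (_ | z) <;>
      first | rfl | exact congrArg some (by simp [eltMul, add_assoc, mul_assoc])
  one_mul := by rintro (_ | x) <;> first | rfl | exact congrArg some (by simp [eltMul])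
  mul_one := by rintro (_ | x) <;> first | rfl | exact congrArg some (by simp [eltMul])
  zero_mul := by rintro (_ | x) <;> rfl
  mul_zero := by rintro (_ | x) <;> rfl
  mul_comm := by
    rintro (_ | x) (_ | y) <;>
      first | rfl | exact congrArg some (by simp [eltMul, add_comm, mul_comm])
  left_distrib := by
    rintro (_ | x) (_ | y) (_ | z) <;> first | rfl | exact congrArg some (eltMul_eltAdd x y z)
  right_distrib := by
    rintro (_ | x) (_ | y) (_ | z) <;> first | rfl | exact congrArg some (eltAdd_eltMul x y z)

theorem eSumF_eq_sum {α : Type*} [Fintype α] (f : α → Option (F × L)) :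
    eSumF f = ∑ a, f a := by
  rw [← Finset.sum_map_toList, List.sum_eq_foldr]
  rfl

theorem eProd_eq_prod {k : ℕ} (f : Fin k → Option (F × L)) : eProd f = ∏ i, f i := by
  rw [← Fin.prod_ofFn, List.prod_eq_foldr]
  rfl

def layerZero : Ideal (Option (F × L)) where
  carrier := {x | sBar x = 0}
  zero_mem' := rfl
  add_mem' := by
    rintro (_ | x) (_ | y) hx hy <;> try assumption
    change x.2 = 0 at hx
    change y.2 = 0 at hy
    show sBar (some (eltAdd x y)) = 0
    unfold eltAdd
    split_ifs <;> simp [sBar, hx, hy]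
  smul_mem' := by
    rintro (_ | x) (_ | y) hy <;> try rfl
    change y.2 = 0 at hy
    show x.2 * y.2 = 0
    rw [hy, mul_zero]

theorem tangibleVal_sum {α : Type*} (s : Finset α) (f : α → Option (F × L)) :
    tangibleVal (∑ a ∈ s, f a) = s.sup fun a => tangibleVal (f a) := by
  induction s using Finset.cons_induction with
  | empty => rfl
  | cons a s ha ih => rw [Finset.sum_cons, Finset.sup_cons, tangibleVal_add, ih]

theorem tangibleVal_prod {α : Type*} (s : Finset α) (f : α → Option (F × L)) :
    tangibleVal (∏ a ∈ s, f a) = ∑ a ∈ s, tangibleVal (f a) := by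
  induction s using Finset.cons_induction with
  | empty => exact WithBot.coe_zero
  | cons a s ha ih => rw [Finset.prod_cons, Finset.sum_cons, tangibleVal_mul, ih]

theorem mem_layerZero_of_add_mem {x y : Option (F × L)} (hxy : x + y ∈ layerZero)
    (hy : y ∈ layerZero) (hle : tangibleVal y ≤ tangibleVal x) : x ∈ layerZero := by
  rcases x with _ | ⟨a, ℓ⟩
  · rfl
  rcases y with _ | ⟨b, m⟩
  · exact hxy
  change m = 0 at hy
  change sBar (some (eltAdd _ _)) = 0 at hxy
  have hba : b ≤ a := WithBot.coe_le_coe.1 hle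
  unfold eltAdd at hxy
  split_ifs at hxy with h₁ h₂
  · exact hxy
  · exact absurd hba (not_le.2 h₂)
  · change ℓ = 0
    simpa [sBar, hy] using hxy

end Semiring

section Determinant

open Finset Equiv Matrix

variable {F L : Type*} [AddCommGroup F] [LinearOrder F] [IsOrderedAddMonoid F] [CommRing L]
  {n : ℕ}

def signElt (σ : Perm (Fin n)) : Option (F × L) := some (0, ((Perm.sign σ : ℤ) : L))

theorem eltDet_eq_sum (A : Matrix (Fin n) (Fin n) (Option (F × L))) :
    eltDet A = ∑ σ : Perm (Fin n), signElt σ * ∏ i, A i (σ i) := by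
  simp only [eltDet, eSumF_eq_sum, eProd_eq_prod]
  rfl

theorem tangibleVal_eltDet (A : Matrix (Fin n) (Fin n) (Option (F × L))) :
    tangibleVal (eltDet A) = univ.sup fun σ : Perm (Fin n) => ∑ i, tangibleVal (A i (σ i)) := by
  rw [eltDet_eq_sum, tangibleVal_sum]
  refine sup_congr rfl fun σ _ => ?_
  rw [tangibleVal_mul, tangibleVal_prod]
  exact zero_add _

theorem tangibleVal_eltDet_le {A : Matrix (Fin n) (Fin n) (Option (F × L))} {α β : Fin n → F}
    (hA : ∀ i j, tangibleVal (A i j) ≤ ↑(α i + β j)) :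
    tangibleVal (eltDet A) ≤ ↑(∑ i, α i + ∑ j, β j) := by
  rw [tangibleVal_eltDet]
  refine Finset.sup_le fun σ _ => ?_
  calc ∑ i, tangibleVal (A i (σ i)) ≤ ∑ i, ((α i + β (σ i) : F) : WithBot F) :=
        sum_le_sum fun i _ => hA i (σ i)
    _ = ↑(∑ i, α i + ∑ j, β j) := by
        rw [← WithBot.coe_sum, sum_add_distrib, Equiv.sum_comp σ β]

theorem eltDet_updateCol (A : Matrix (Fin n) (Fin n) (Option (F × L))) (j : Fin n)
    (c : Fin n → Option (F × L)) :
    eltDet (A.updateCol j c) = ∑ σ : Perm (Fin n),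
      c (σ⁻¹ j) * (signElt σ * ∏ i ∈ univ.erase (σ⁻¹ j), A i (σ i)) := by
  rw [eltDet_eq_sum]
  refine sum_congr rfl fun σ _ => ?_
  rw [← mul_prod_erase univ _ (mem_univ (σ⁻¹ j)), mul_left_comm]
  congr 2
  · simp
  · refine prod_congr rfl fun i hi => ?_
    have hσi : σ i ≠ j := fun h => (mem_erase.1 hi).1 (Perm.eq_inv_iff_eq.2 h)
    simp [hσi]

theorem eltDet_updateCol_mem_layerZero (A : Matrix (Fin n) (Fin n) (Option (F × L)))
    (j : Fin n) {c : Fin n → Option (F × L)} (hc : ∀ i, c i ∈ layerZero) :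
    eltDet (A.updateCol j c) ∈ layerZero := by
  rw [eltDet_updateCol]
  exact Ideal.sum_mem _ fun σ _ => Ideal.mul_mem_right _ _ (hc _)

theorem eltDet_updateCol_mulVec (A : Matrix (Fin n) (Fin n) (Option (F × L))) (j : Fin n)
    (v : Fin n → Option (F × L)) :
    eltDet (A.updateCol j (A *ᵥ v)) = ∑ k, v k * eltDet (A.updateCol j fun i => A i k) := by
  simp only [eltDet_updateCol, mulVec, dotProduct, sum_mul, mul_sum]
  rw [sum_comm]
  exact sum_congr rfl fun σ _ => sum_congr rfl fun k _ => by ring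

theorem signElt_add_signElt_swap_mul_mem_layerZero {j k : Fin n} (hjk : j ≠ k)
    (σ : Perm (Fin n)) :
    (signElt σ + signElt (swap j k * σ) : Option (F × L)) ∈ layerZero := by
  show sBar (some (eltAdd _ _)) = 0
  rw [eltAdd, if_neg (lt_irrefl _), if_neg (lt_irrefl _), Perm.sign_mul, Perm.sign_swap hjk]
  simp [sBar]

theorem eltDet_mem_layerZero_of_col_eq {A : Matrix (Fin n) (Fin n) (Option (F × L))}
    {j k : Fin n} (hjk : j ≠ k) (hA : ∀ i, A i j = A i k) : eltDet A ∈ layerZero := by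
  set τ := swap j k
  have hτ : ∀ σ : Perm (Fin n), ∏ i, A i ((τ * σ) i) = ∏ i, A i (σ i) := fun σ =>
    prod_congr rfl fun i _ => by
      rw [Perm.mul_apply]
      rcases eq_or_ne (σ i) j with h | h
      · rw [h, swap_apply_left, hA]
      rcases eq_or_ne (σ i) k with h' | h'
      · rw [h', swap_apply_right, hA]
      · rw [swap_apply_of_ne_of_ne h h']
  set E := univ.filter fun σ : Perm (Fin n) => Perm.sign σ = 1
  -- pair each even `σ` with the odd `swap j k * σ`: same product, opposite sign
  have hodd : univ.filter (fun σ : Perm (Fin n) => ¬ Perm.sign σ = 1) =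
      E.map (Equiv.mulLeft τ).toEmbedding := by
    ext σ
    simp [E, τ, mem_map_equiv, Perm.sign_mul, Perm.sign_swap hjk, Int.units_ne_iff_eq_neg,
      neg_eq_iff_eq_neg]
  rw [eltDet_eq_sum, ← sum_filter_add_sum_filter_not univ fun σ => Perm.sign σ = 1, hodd,
    sum_map, ← sum_add_distrib]
  refine Ideal.sum_mem _ fun σ _ => ?_
  rw [Equiv.coe_toEmbedding, Equiv.coe_mulLeft, hτ, ← add_mul]
  exact Ideal.mul_mem_right _ _ (signElt_add_signElt_swap_mul_mem_layerZero hjk σ)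

end Determinant

section Potential

open Finset Equiv

variable {ι F : Type*}

theorem finite_setOf_nodup_cons [Fintype ι] (u : ι) : {l : List ι | (u :: l).Nodup}.Finite :=
  (List.finite_length_le ι (Fintype.card ι)).subset fun _ hl =>
    (List.nodup_cons.1 hl).2.length_le_card

variable [AddCommMonoid F] (W : ι → ι → WithBot F)

def walkWeight : List ι → WithBot F
  | a :: b :: l => W a b + walkWeight (b :: l)
  | _ => 0

theorem walkWeight_append_cons (l₁ : List ι) (a : ι) (l₂ : List ι) :
    walkWeight W (l₁ ++ a :: l₂) = walkWeight W (l₁ ++ [a]) + walkWeight W (a :: l₂) := by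
  induction l₁ with
  | nil => exact (zero_add _).symm
  | cons b l₁ ih => cases l₁ <;> simp_all [walkWeight, add_assoc]

theorem walkWeight_cons_append_singleton (a b : ι) (l : List ι) :
    walkWeight W (a :: l ++ [b]) = (List.zipWith W (a :: l) (l ++ [b])).sum := by
  induction l generalizing a <;> simp_all [walkWeight]

theorem walkWeight_closed [DecidableEq ι] {a : ι} {l : List ι} (hl : (a :: l).Nodup) :
    walkWeight W (a :: l ++ [a]) = ∑ x ∈ (a :: l).toFinset, W x ((a :: l).formPerm x) := by
  have hrot : (a :: l).rotate 1 = l ++ [a] := by rw [List.rotate_cons_succ, List.rotate_zero]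
  rw [walkWeight_cons_append_singleton, ← hrot, List.sum_toFinset _ hl]
  congr 1
  refine List.ext_getElem (by simp) fun i h₁ h₂ => ?_
  simp only [List.getElem_zipWith, List.getElem_map, List.getElem_rotate,
    List.formPerm_apply_getElem _ hl]

variable [LinearOrder F]

noncomputable def maxSimpleWalkWeight [Fintype ι] (u : ι) : WithBot F :=
  (finite_setOf_nodup_cons u).toFinset.sup fun l => walkWeight W (u :: l)

theorem walkWeight_le_maxSimpleWalkWeight [Fintype ι] {u : ι} {l : List ι}
    (hl : (u :: l).Nodup) : walkWeight W (u :: l) ≤ maxSimpleWalkWeight W u :=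
  le_sup (f := fun l => walkWeight W (u :: l)) ((finite_setOf_nodup_cons u).mem_toFinset.2 hl)

variable [Fintype ι] [DecidableEq ι]

theorem walkWeight_closed_nonpos (hW₀ : ∀ u, W u u = 0) (hW : ∀ ζ : Perm ι, ∑ u, W u (ζ u) ≤ 0)
    {a : ι} {l : List ι} (hl : (a :: l).Nodup) : walkWeight W (a :: l ++ [a]) ≤ 0 := by
  rw [walkWeight_closed W hl, sum_subset (subset_univ _) fun u _ hu => ?_]
  · exact hW _
  · rw [List.formPerm_apply_of_notMem (by simpa using hu), hW₀]

variable [IsOrderedAddMonoid F]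

theorem walkWeight_cons_le_maxSimpleWalkWeight (hW₀ : ∀ u, W u u = 0)
    (hW : ∀ ζ : Perm ι, ∑ u, W u (ζ u) ≤ 0) (u : ι) {l : List ι} (hl : l.Nodup) :
    walkWeight W (u :: l) ≤ maxSimpleWalkWeight W u := by
  by_cases hu : u ∈ l
  · obtain ⟨l₁, l₂, rfl⟩ := List.append_of_mem hu
    rw [← List.cons_append, walkWeight_append_cons]
    have hl' := List.nodup_middle.1 hl
    calc walkWeight W (u :: l₁ ++ [u]) + walkWeight W (u :: l₂)
        ≤ 0 + maxSimpleWalkWeight W u :=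
          add_le_add (walkWeight_closed_nonpos W hW₀ hW (hl'.sublist (by simp)))
            (walkWeight_le_maxSimpleWalkWeight W (hl'.sublist (by simp)))
      _ = maxSimpleWalkWeight W u := zero_add _
  · exact walkWeight_le_maxSimpleWalkWeight W (List.nodup_cons.2 ⟨hu, hl⟩)

theorem exists_potential (hW₀ : ∀ u, W u u = 0) (hW : ∀ ζ : Perm ι, ∑ u, W u (ζ u) ≤ 0) :
    ∃ p : ι → F, ∀ u v, W u v + p v ≤ p u := by
  have hne : ∀ u, maxSimpleWalkWeight W u ≠ ⊥ := fun u =>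
    ne_bot_of_le_ne_bot WithBot.coe_ne_bot
      (walkWeight_le_maxSimpleWalkWeight W (List.nodup_singleton u))
  choose p hp using fun u => WithBot.ne_bot_iff_exists.1 (hne u)
  refine ⟨p, fun u v => ?_⟩
  obtain ⟨l, hl, hmax⟩ := exists_mem_eq_sup (finite_setOf_nodup_cons v).toFinset
    ⟨[], by simp⟩ fun l => walkWeight W (v :: l)
  rw [hp, hp, maxSimpleWalkWeight, hmax, ← walkWeight]
  exact walkWeight_cons_le_maxSimpleWalkWeight W hW₀ hW u
    ((finite_setOf_nodup_cons v).mem_toFinset.1 hl)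

end Potential

section Duality

open Finset Equiv

variable {ι F : Type*} [Fintype ι] [DecidableEq ι] [AddCommGroup F] [LinearOrder F]
  [IsOrderedAddMonoid F]

theorem exists_dual_of_optimal_perm (M : ι → ι → WithBot F) {σ : Perm ι} {δ : F}
    (hσ : ∑ i, M i (σ i) = δ) (hmax : ∀ τ : Perm ι, ∑ i, M i (τ i) ≤ δ) :
    ∃ α β : ι → F, (∀ i j, M i j ≤ ↑(α i + β j)) ∧ ∑ i, α i + ∑ j, β j = δ := by
  have hfin : ∀ i, M i (σ i) ≠ ⊥ := fun i h =>
    WithBot.coe_ne_bot (hσ ▸ WithBot.sum_eq_bot_iff.2 ⟨i, mem_univ i, h⟩)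
  choose a ha using fun i => WithBot.ne_bot_iff_exists.1 (hfin i)
  have hδ : ∑ i, a i = δ :=
    WithBot.coe_injective (by rw [WithBot.coe_sum]; simp_rw [ha]; exact hσ)
  -- `W r s` is the gain of giving row `r` the column `σ s` instead of `σ r`
  set W : ι → ι → WithBot F := fun r s => M r (σ s) + ↑(-a r)
  have hW₀ : ∀ r, W r r = 0 := fun r => by
    rw [show W r r = M r (σ r) + ↑(-a r) from rfl, ← ha, ← WithBot.coe_add, add_neg_cancel,
      WithBot.coe_zero]
  have hW : ∀ ζ : Perm ι, ∑ r, W r (ζ r) ≤ 0 := fun ζ =>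
    calc ∑ r, W r (ζ r) = ∑ r, M r ((ζ.trans σ) r) + ↑(-δ) := by
          rw [sum_add_distrib, ← WithBot.coe_sum, sum_neg_distrib, hδ]
          rfl
      _ ≤ ↑δ + ↑(-δ) := by gcongr; exact hmax _
      _ = 0 := by rw [← WithBot.coe_add, add_neg_cancel, WithBot.coe_zero]
  obtain ⟨p, hp⟩ := exists_potential W hW₀ hW
  refine ⟨fun r => a r + p r, fun j => -p (σ⁻¹ j), fun r j => ?_, ?_⟩
  · have h := hp r (σ⁻¹ j)
    simp only [W, Perm.coe_inv, apply_symm_apply] at h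
    rw [← WithBot.add_le_add_iff_right (WithBot.coe_ne_bot (a := -a r + p (σ⁻¹ j)))]
    calc M r j + ↑(-a r + p (σ⁻¹ j)) = M r j + ↑(-a r) + ↑(p (σ⁻¹ j)) := by
          rw [WithBot.coe_add, add_assoc]
      _ ≤ ↑(p r) := h
      _ = ↑(a r + p r + -p (σ⁻¹ j) + (-a r + p (σ⁻¹ j))) := by congr 1; abel
  · rw [sum_add_distrib, hδ, Equiv.sum_comp σ⁻¹ fun s => -p s, sum_neg_distrib,
      add_neg_cancel_right]

end Duality

section Main

open Finset Equiv Matrix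

variable {F L : Type*} [AddCommGroup F] [LinearOrder F] [IsOrderedAddMonoid F] [CommRing L]
  {n : ℕ}

theorem exists_dual_of_eltDet_eq_some {A : Matrix (Fin n) (Fin n) (Option (F × L))}
    {d : F × L} (hd : eltDet A = some d) :
    ∃ α β : Fin n → F,
      (∀ i j, tangibleVal (A i j) ≤ ↑(α i + β j)) ∧ ∑ i, α i + ∑ j, β j = d.1 := by
  have htd : (univ.sup fun σ : Perm (Fin n) => ∑ i, tangibleVal (A i (σ i))) = d.1 := by
    rw [← tangibleVal_eltDet, hd]
    rfl
  obtain ⟨σ, -, hσ⟩ :=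
    exists_mem_eq_sup univ univ_nonempty fun σ : Perm (Fin n) => ∑ i, tangibleVal (A i (σ i))
  exact exists_dual_of_optimal_perm (fun i j => tangibleVal (A i j)) (hσ ▸ htd)
    fun τ => htd ▸ le_sup (f := fun σ : Perm (Fin n) => ∑ i, tangibleVal (A i (σ i)))
      (mem_univ τ)

theorem tangibleVal_mul_eltDet_updateCol_le {A : Matrix (Fin n) (Fin n) (Option (F × L))}
    {α β : Fin n → F} {δ : F} (hA : ∀ i j, tangibleVal (A i j) ≤ ↑(α i + β j))
    (hαβ : ∑ i, α i + ∑ j, β j = δ) (hdet : tangibleVal (eltDet A) = δ) {x y : Option (F × L)}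
    {i k : Fin n} (hxy : tangibleVal x + ↑(β k) ≤ tangibleVal y + ↑(β i)) :
    tangibleVal (x * eltDet (A.updateCol i fun r => A r k)) ≤ tangibleVal (y * eltDet A) := by
  have hcol : tangibleVal (eltDet (A.updateCol i fun r => A r k)) ≤ ↑(δ + β k - β i) := by
    refine (tangibleVal_eltDet_le (α := α) (β := Function.update β i (β k))
      fun r j => ?_).trans_eq ?_
    · rcases eq_or_ne j i with rfl | hj
      · simpa using hA r k
      · simpa [hj] using hA r j
    · rw [sum_update_of_mem (mem_univ i), sdiff_singleton_eq_erase,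
        sum_erase_eq_sub (mem_univ i), ← hαβ]
      congr 1
      abel
  rw [← WithBot.add_le_add_iff_right (WithBot.coe_ne_bot (a := β i)), tangibleVal_mul,
    tangibleVal_mul, hdet]
  calc tangibleVal x + tangibleVal (eltDet (A.updateCol i fun r => A r k)) + ↑(β i)
      ≤ tangibleVal x + ↑(δ + β k - β i) + ↑(β i) := by gcongr
    _ = tangibleVal x + ↑(β k) + ↑δ := by
        rw [add_assoc (tangibleVal x), add_assoc (tangibleVal x), ← WithBot.coe_add,
          ← WithBot.coe_add, sub_add_cancel, add_comm (β k)]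
    _ ≤ tangibleVal y + ↑(β i) + ↑δ := by gcongr
    _ = tangibleVal y + ↑δ + ↑(β i) := add_right_comm _ _ _

theorem mul_eltDet_mem_layerZero {A : Matrix (Fin n) (Fin n) (Option (F × L))}
    {v : Fin n → Option (F × L)} (hAv : ∀ r, (A *ᵥ v) r ∈ layerZero) {α β : Fin n → F}
    {δ : F}(hA : ∀ i j, tangibleVal (A i j) ≤ ↑(α i + β j))
    (hαβ : ∑ i, α i + ∑ j, β j = δ) (hdet : tangibleVal (eltDet A) = δ) {i : Fin n}
    (hi : ∀ k, tangibleVal (v k) + ↑(β k) ≤ tangibleVal (v i) + ↑(β i)) :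
    v i * eltDet A ∈ layerZero := by
  have hcramer := eltDet_updateCol_mem_layerZero A i hAv
  rw [eltDet_updateCol_mulVec, ← add_sum_erase _ _ (mem_univ i), updateCol_eq_self] at hcramer
  refine mem_layerZero_of_add_mem hcramer ?_ ?_
  · refine Ideal.sum_mem _ fun k hk => Ideal.mul_mem_left _ _ ?_
    exact eltDet_mem_layerZero_of_col_eq (ne_of_mem_erase hk).symm fun r => by
      simp [ne_of_mem_erase hk]
  · rw [tangibleVal_sum]
    exact Finset.sup_le fun k _ => tangibleVal_mul_eltDet_updateCol_le hA hαβ hdet (hi k)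

end Main

end ELT

open Finset ELT

/-- If det(A) is invertible in R, then the columns of A are linearly independent:
the only vector with entries in R^× ∪ {−∞} mapped by A to a layer-zero vector is
the all-(−∞) vector. -/
theorem columns_independent_of_det_invertible {F L : Type*}
    [AddCommGroup F] [LinearOrder F] [IsOrderedAddMonoid F] [CommRing L] {n : ℕ}
    (A : Matrix (Fin n) (Fin n) (Option (F × L)))
    (d e : F × L) (hd : eltDet A = some d)
    (he : eltMul d e = ((0 : F), (1 : L)))
    (v : Fin n → Option (F × L))
    (hv : ∀ i, v i = none ∨ ∃ w : F × L, v i = some w ∧ w.2 ≠ 0)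
    (hAv : ∀ i, sBar (eSumF fun j => eMul (A i j) (v j)) = 0) :
    ∀ i, v i = none := by
  by_contra! hsupp
  obtain ⟨α, β, hA, hαβ⟩ := exists_dual_of_eltDet_eq_some hd
  obtain ⟨i, hi, hmax⟩ := (univ.filter fun k => v k ≠ none).exists_max_image
    (fun k => tangibleVal (v k) + ↑(β k)) (by simpa [Finset.Nonempty] using hsupp)
  obtain ⟨w, hw, hw₀⟩ := (hv i).resolve_left (mem_filter.1 hi).2
  have hghost : v i * eltDet A ∈ layerZero := by
    refine mul_eltDet_mem_layerZero (fun r => ?_) hA hαβ (by rw [hd]; rfl) fun k => ?_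
    · have h := hAv r
      rw [eSumF_eq_sum] at h
      exact h
    · by_cases hk : v k = none
      · rw [hk]
        exact bot_le
      · exact hmax k (by simpa using hk)
  rw [hw, hd] at hghost
  exact hw₀ ((IsUnit.of_mul_eq_one _ (congrArg Prod.snd he)).mul_left_eq_zero.1 hghost)
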